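/- arXiv:2305.02306 — 2 statements merged into one kernel-verified Lean document; each statement's English description precedes it below -/
import Mathlib

section
/- Let $\pi$ be a pairing of $\{1,\ldots,2K\}$ (a fixed-point-free involution). Construct a closed surface $S(\pi)$ by taking a $2K$-gon and gluing each pair of edges matched by $\pi$ with opposite orientation. Then $S(\pi)$ is a sphere (i.e., has Euler characteristic $2$) if and only if $\pi$, viewed as a partition of $\{1,\ldots,2K\}$ into pairs, is a non-crossing partition. -/
private abbrev rel {α : Type*} (f : α → α) : α → α → Prop := fun p q => q = f p

private lemma rel_mk {α : Type*} (f : α → α) (p : α) :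
    Quot.mk (rel f) p = Quot.mk (rel f) (f p) := Quot.sound rfl

private instance {α : Type*} [Finite α] (r : α → α → Prop) : Finite (Quot r) :=
  Finite.of_surjective (Quot.mk r) (fun q => Quot.exists_rep q)

/-- Counting: `2 * #orbits ≤ #α + #fixedpoints`. -/
private lemma card_quot_le {α : Type*} [Finite α] (f : α → α) (hf : Function.Injective f) :
    2 * Nat.card (Quot (rel f)) ≤ Nat.card α + Nat.card {p : α // f p = p} := by
  classical
  have hout : ∀ q : Quot (rel f), Quot.mk (rel f) q.out = q := fun q => Quot.out_eq q
  have outinj : ∀ {q q' : Quot (rel f)}, q.out = q'.out → q = q' := by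
    intro q q' h; rw [← hout q, ← hout q', h]
  have key : ∀ {q q' : Quot (rel f)}, q.out = f q'.out → q = q' := by
    intro q q' h
    rw [← hout q, ← hout q', h, ← rel_mk]
  set F : Quot (rel f) × Bool → α ⊕ {p : α // f p = p} := fun x =>
    if x.2 then
      (if h : f x.1.out = x.1.out then Sum.inr ⟨x.1.out, h⟩ else Sum.inl (f x.1.out))
    else Sum.inl x.1.out with hF
  have hinj : Function.Injective F := by
    rintro ⟨q, b⟩ ⟨q', b'⟩ h
    cases b <;> cases b' <;>
      simp only [hF, if_true, if_false, Bool.false_eq_true, Bool.true_eq_false] at h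
    · simp only [Sum.inl.injEq] at h
      exact Prod.ext (outinj h) rfl
    · exfalso
      by_cases h1 : f q'.out = q'.out
      · rw [dif_pos h1] at h; exact absurd h (by simp)
      · rw [dif_neg h1] at h
        simp only [Sum.inl.injEq] at h
        have hq : q = q' := key h
        subst hq
        exact h1 h.symm
    · exfalso
      by_cases h1 : f q.out = q.out
      · rw [dif_pos h1] at h; exact absurd h (by simp)
      · rw [dif_neg h1] at h
        simp only [Sum.inl.injEq] at h
        have hq : q' = q := key h.symm
        subst hq
        exact h1 h
    · by_cases h1 : f q.out = q.out <;> by_cases h2 : f q'.out = q'.out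
      · rw [dif_pos h1, dif_pos h2] at h
        simp only [Sum.inr.injEq, Subtype.mk.injEq] at h
        exact Prod.ext (outinj h) rfl
      · rw [dif_pos h1, dif_neg h2] at h; exact absurd h (by simp)
      · rw [dif_neg h1, dif_pos h2] at h; exact absurd h (by simp)
      · rw [dif_neg h1, dif_neg h2] at h
        simp only [Sum.inl.injEq] at h
        exact Prod.ext (outinj (hf h)) rfl
  have hle := Nat.card_le_card_of_injective F hinj
  have h1 : Nat.card (Quot (rel f) × Bool) = 2 * Nat.card (Quot (rel f)) := by
    rw [Nat.card_prod]
    have : Nat.card Bool = 2 := by simp [Nat.card_eq_fintype_card]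
    rw [this, Nat.mul_comm]
  have h2 : Nat.card (α ⊕ {p : α // f p = p}) = Nat.card α + Nat.card {p : α // f p = p} :=
    Nat.card_sum
  omega

private def quotEquivSelf {α : Type*} (f : α → α) (hf : ∀ p, f p = p) : Quot (rel f) ≃ α where
  toFun := Quot.lift id (fun p q h => by rw [h, hf])
  invFun := Quot.mk _
  left_inv := by intro q; induction q using Quot.ind with | _ p => rfl
  right_inv := fun p => rfl

private noncomputable def quotEquivOption {α β : Type*} (f : α → α) (f' : β → β)
    (u v : α) (g : α → β) (h : β → α)
    (Huv : u ≠ v)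
    (H1 : f v = v)
    (H2 : ∀ p, p ≠ u → p ≠ v → h (g p) = p)
    (H3g : ∀ y, g (h y) = y) (H3u : ∀ y, h y ≠ u) (H3v : ∀ y, h y ≠ v)
    (H4 : ∀ p, p ≠ u → p ≠ v → f p ≠ v)
    (H5u : f u ≠ u) (H5v : f u ≠ v)
    (H6 : ∀ p, p ≠ u → p ≠ v → f p ≠ u → f' (g p) = g (f p))
    (H7 : ∀ p, p ≠ u → p ≠ v → f p = u → f' (g p) = g (f u)) :
    Quot (rel f) ≃ Option (Quot (rel f')) := by
  classical
  set G : α → Option (Quot (rel f')) := fun p =>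
    if p = v then none else if p = u then some (Quot.mk _ (g (f u)))
      else some (Quot.mk _ (g p)) with hG
  have Gresp : ∀ p, G p = G (f p) := by
    intro p
    by_cases hv : p = v
    · subst hv; rw [H1]
    by_cases hu : p = u
    · subst hu
      simp only [hG, if_neg hv, if_pos rfl, if_neg H5v, if_neg H5u, if_true]
    · have hfv : f p ≠ v := H4 p hu hv
      by_cases hfu : f p = u
      · simp only [hG, if_neg hv, if_neg hu, if_neg hfv, if_pos hfu]
        have : Quot.mk (rel f') (g p) = Quot.mk (rel f') (f' (g p)) := rel_mk _ _
        rw [this, H7 p hu hv hfu]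
      · simp only [hG, if_neg hv, if_neg hu, if_neg hfv, if_neg hfu]
        have : Quot.mk (rel f') (g p) = Quot.mk (rel f') (f' (g p)) := rel_mk _ _
        rw [this, H6 p hu hv hfu]
  have resp' : ∀ y, Quot.mk (rel f) (h y) = Quot.mk (rel f) (h (f' y)) := by
    intro y
    have hyu := H3u y; have hyv := H3v y
    by_cases hc : f (h y) = u
    · have e1 : f' y = g (f u) := by
        conv_lhs => rw [← H3g y]
        exact H7 _ hyu hyv hc
      have e2 : h (f' y) = f u := by rw [e1, H2 _ H5u H5v]
      rw [e2, rel_mk f (h y), hc, rel_mk f u]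
    · have e1 : f' y = g (f (h y)) := by
        conv_lhs => rw [← H3g y]
        exact H6 _ hyu hyv hc
      have e2 : h (f' y) = f (h y) := by
        rw [e1, H2 _ hc (H4 _ hyu hyv)]
      rw [e2, rel_mk f (h y)]
  have hGv : G v = none := by simp [hG]
  have hGu : G u = some (Quot.mk (rel f') (g (f u))) := by simp [hG, Huv]
  have hGp : ∀ p, p ≠ u → p ≠ v → G p = some (Quot.mk (rel f') (g p)) := by
    intro p hu hv; simp [hG, hu, hv]
  refine ⟨Quot.lift G (fun p q (hpq : q = f p) => by rw [hpq, ← Gresp]),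
    fun o => Option.elim o (Quot.mk _ v)
      (Quot.lift (fun y => Quot.mk (rel f) (h y)) (fun y y' (hyy : y' = f' y) => by
        show Quot.mk (rel f) (h y) = Quot.mk (rel f) (h y')
        rw [hyy]; exact resp' y)), ?_, ?_⟩
  · intro q
    induction q using Quot.ind with | _ p =>
    show Option.elim (G p) (Quot.mk (rel f) v) _ = Quot.mk (rel f) p
    by_cases hv : p = v
    · subst hv; rw [hGv]; rfl
    · by_cases hu : p = u
      · rw [hu, hGu]
        show Quot.mk (rel f) (h (g (f u))) = Quot.mk (rel f) u
        rw [H2 _ H5u H5v]; exact (rel_mk f u).symm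
      · rw [hGp p hu hv]
        show Quot.mk (rel f) (h (g p)) = Quot.mk (rel f) p
        rw [H2 _ hu hv]
  · intro o
    match o with
    | none =>
      show G v = none
      exact hGv
    | some z =>
      induction z using Quot.ind with | _ y =>
      show G (h y) = some (Quot.mk (rel f') y)
      rw [hGp _ (H3u y) (H3v y), H3g y]

private lemma main_aux : ∀ K : ℕ, 0 < K → ∀ σ : Equiv.Perm (ZMod (2 * K)),
    (∀ x, σ (σ x) = x) → (∀ x, σ x ≠ x) →
    (Nat.card (Quot (rel (fun p : ZMod (2 * K) => σ p + 1))) = K + 1 ↔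
      ∀ a b c d : ZMod (2 * K), a.val < b.val → b.val < c.val → c.val < d.val →
        σ a = c → σ b = d → False) := by
  intro K
  induction K using Nat.strong_induction_on with
  | _ K IH =>
  intro hK σ hinv hfpf
  haveI : NeZero (2 * K) := ⟨by omega⟩
  haveI : Fact (1 < 2 * K) := ⟨by omega⟩
  have vinj : ∀ x y : ZMod (2 * K), x.val = y.val → x = y := fun x y h => ZMod.val_injective _ h
  have hvlt : ∀ x : ZMod (2 * K), x.val < 2 * K := fun x => ZMod.val_lt x
  have val_add_one : ∀ x : ZMod (2 * K),
      (x + 1).val = if x.val + 1 < 2 * K then x.val + 1 else 0 := by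
    intro x
    rw [ZMod.val_add, ZMod.val_one]
    split_ifs with h
    · exact Nat.mod_eq_of_lt h
    · have : x.val + 1 = 2 * K := by have := hvlt x; omega
      rw [this, Nat.mod_self]
  have finj : Function.Injective (fun p : ZMod (2 * K) => σ p + 1) := by
    intro p q h
    exact σ.injective (add_right_cancel h)
  rcases Nat.lt_or_ge K 2 with hK1 | hK2
  · -- base case K = 1
    have hK1' : K = 1 := by omega
    subst hK1'
    constructor
    · intro _ a b c d h1 h2 h3 _ _
      have := hvlt a; have := hvlt b; have := hvlt c; have := hvlt d
      omega
    · intro _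
      have hstep : ∀ p : ZMod (2 * 1), σ p + 1 = p := by
        have h0 : σ 0 = 1 := by
          have := hfpf 0
          revert this
          generalize σ 0 = z
          revert z; decide
        have h1 : σ 1 = 0 := by rw [← h0, hinv]
        intro p
        have hp : p = 0 ∨ p = 1 := by revert p; decide
        rcases hp with rfl | rfl
        · rw [h0]; decide
        · rw [h1]; decide
      rw [Nat.card_congr (quotEquivSelf _ hstep), Nat.card_zmod]
  · -- inductive step, K ≥ 2
    by_cases hA : ∃ a : ZMod (2 * K), σ a = a + 1 ∧ a.val + 1 < 2 * K
    · obtain ⟨a, ha, hm⟩ := hA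
      set m := a.val with hmdef
      haveI : NeZero (2 * (K-1)) := ⟨by omega⟩
      haveI : Fact (1 < 2 * (K-1)) := ⟨by omega⟩
      have vinj' : ∀ x y : ZMod (2 * (K-1)), x.val = y.val → x = y :=
        fun x y h => ZMod.val_injective _ h
      have hvlt' : ∀ x : ZMod (2 * (K-1)), x.val < 2 * (K-1) := fun x => ZMod.val_lt x
      have hval_a1 : (a + 1).val = m + 1 := by rw [val_add_one, if_pos hm]
      have hval_a2 : (a + 1 + 1).val = if m + 2 < 2 * K then m + 2 else 0 := by
        rw [val_add_one, hval_a1]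
      have hval_am : (a - 1).val = if m = 0 then 2*K - 1 else m - 1 := by
        have h := val_add_one (a - 1)
        rw [sub_add_cancel] at h
        have := hvlt (a - 1)
        split_ifs at h ⊢ <;> omega
      have ne_a : ∀ x : ZMod (2*K), x ≠ a ↔ x.val ≠ m := by
        intro x
        constructor
        · intro h h'; exact h (vinj _ _ h')
        · intro h h'; rw [h'] at h; exact h rfl
      have ne_a1 : ∀ x : ZMod (2*K), x ≠ a + 1 ↔ x.val ≠ m + 1 := by
        intro x
        constructor
        · intro h h'; exact h (vinj _ _ (by rw [h', hval_a1]))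
        · intro h h'; rw [h'] at h; exact h hval_a1
      obtain ⟨E, hE⟩ : ∃ E : ZMod (2*K) → ZMod (2*(K-1)), E = fun x =>
          (((if x.val < m then x.val else x.val - 2 : ℕ)) : ZMod (2*(K-1))) := ⟨_, rfl⟩
      obtain ⟨E', hE'⟩ : ∃ E' : ZMod (2*(K-1)) → ZMod (2*K), E' = fun y =>
          (((if y.val < m then y.val else y.val + 2 : ℕ)) : ZMod (2*K)) := ⟨_, rfl⟩
      have hEval : ∀ x : ZMod (2*K), x.val ≠ m → x.val ≠ m + 1 →
          (E x).val = if x.val < m then x.val else x.val - 2 := by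
        intro x h1 h2
        have hx := hvlt x
        simp only [hE]
        exact ZMod.val_cast_of_lt (by split_ifs <;> omega)
      have hE'val : ∀ y : ZMod (2*(K-1)), (E' y).val = if y.val < m then y.val else y.val + 2 := by
        intro y
        have hy := hvlt' y
        simp only [hE']
        exact ZMod.val_cast_of_lt (by split_ifs <;> omega)
      have hE'ne : ∀ y, (E' y).val ≠ m ∧ (E' y).val ≠ m + 1 := by
        intro y
        have h := hE'val y
        have := hvlt' y
        constructor <;> rw [h] <;> split_ifs <;> omega
      have hE'E : ∀ x : ZMod (2*K), x.val ≠ m → x.val ≠ m+1 → E' (E x) = x := by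
        intro x h1 h2
        apply vinj
        rw [hE'val, hEval _ h1 h2]
        have := hvlt x
        split_ifs <;> omega
      have hEE' : ∀ y, E (E' y) = y := by
        intro y
        apply vinj'
        obtain ⟨hne1, hne2⟩ := hE'ne y
        rw [hEval _ hne1 hne2, hE'val]
        have := hvlt' y
        split_ifs <;> omega
      have castkey : ∀ u v : ℕ, (u = v + 1 ∨ (u = 0 ∧ v + 1 = 2*(K-1))) →
          ((u : ZMod (2*(K-1))) = (v : ZMod (2*(K-1))) + 1) := by
        intro u v h
        rcases h with rfl | ⟨rfl, hv⟩
        · push_cast; ring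
        · have h2 : ((v : ZMod (2*(K-1))) + 1) = ((v + 1 : ℕ) : ZMod (2*(K-1))) := by
            push_cast; ring
          rw [h2, hv, ZMod.natCast_self, Nat.cast_zero]
      have hshift : ∀ x : ZMod (2*K), x ≠ a → x ≠ a + 1 → x + 1 ≠ a → E (x + 1) = E x + 1 := by
        intro x hx1 hx2 hx3
        rw [ne_a] at hx1
        rw [ne_a1] at hx2
        have hx := hvlt x
        have h1 := val_add_one x
        by_cases hw : x.val + 1 < 2 * K
        · rw [if_pos hw] at h1
          have hx3' : x.val + 1 ≠ m := by
            intro h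
            exact hx3 (vinj _ _ (by rw [h1, h]))
          simp only [hE]
          rw [h1]
          exact castkey _ _ (by split_ifs <;> omega)
        · rw [if_neg hw] at h1
          have hm0 : m ≠ 0 := by
            intro h0
            exact hx3 (vinj _ _ (by rw [h1, ← h0]))
          simp only [hE]
          rw [h1]
          exact castkey _ _ (by split_ifs <;> omega)
      have hne_am : (a-1).val ≠ m ∧ (a-1).val ≠ m+1 := by
        constructor <;> rw [hval_am] <;> split_ifs <;> omega
      have hshift6 : E (a + 1 + 1) = E (a - 1) + 1 := by
        simp only [hE]
        rw [hval_a2, hval_am]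
        exact castkey _ _ (by split_ifs <;> omega)
      have hsne : ∀ y : ZMod (2*(K-1)), (σ (E' y)).val ≠ m ∧ (σ (E' y)).val ≠ m + 1 := by
        intro y
        obtain ⟨h1, h2⟩ := hE'ne y
        constructor
        · intro h
          have hh : σ (E' y) = a := vinj _ _ h
          have hh2 : E' y = σ a := by rw [← hh, hinv]
          rw [ha] at hh2
          exact h2 (by rw [hh2, hval_a1])
        · intro h
          have hh : σ (E' y) = a + 1 := vinj _ _ (by rw [h, hval_a1])
          have hh2 : E' y = σ (a+1) := by rw [← hh, hinv]
          have hsa1 : σ (a+1) = a := by rw [← ha, hinv]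
          rw [hsa1] at hh2
          exact h1 (by rw [hh2])
      have hstinv : Function.LeftInverse (fun y : ZMod (2*(K-1)) => E (σ (E' y)))
          (fun y : ZMod (2*(K-1)) => E (σ (E' y))) := by
        intro y
        simp only
        rw [hE'E _ (hsne y).1 (hsne y).2, hinv, hEE']
      set σ' : Equiv.Perm (ZMod (2*(K-1))) :=
        ⟨fun y => E (σ (E' y)), fun y => E (σ (E' y)), hstinv, hstinv⟩ with hσ'def
      have hσ'app : ∀ y, σ' y = E (σ (E' y)) := fun y => rfl
      have hinv' : ∀ y, σ' (σ' y) = y := hstinv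
      have hfpf' : ∀ y, σ' y ≠ y := by
        intro y h
        rw [hσ'app] at h
        have h2 : σ (E' y) = E' y := by
          have h3 := congrArg E' h
          rwa [hE'E _ (hsne y).1 (hsne y).2] at h3
        exact hfpf (E' y) h2
      have IHres := IH (K-1) (by omega) (by omega) σ' hinv' hfpf'
      -- the quotient equivalence
      have Huv : a ≠ a + 1 := (ne_a1 a).mpr (by omega)
      have hsa1 : σ (a+1) = a := by rw [← ha, hinv]
      have equiv := quotEquivOption (fun p : ZMod (2*K) => σ p + 1)
        (fun y : ZMod (2*(K-1)) => σ' y + 1) a (a+1) E E'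
        Huv
        (by rw [hsa1])
        (fun p h1 h2 => hE'E p ((ne_a p).mp h1) ((ne_a1 p).mp h2))
        hEE'
        (fun y => (ne_a _).mpr (hE'ne y).1)
        (fun y => (ne_a1 _).mpr (hE'ne y).2)
        (by
          intro p h1 h2 h
          have h3 : σ p = a := add_right_cancel h
          exact h2 (by rw [← hinv p, h3, ha]))
        (by
          rw [ha]
          intro h
          have := congrArg ZMod.val h
          rw [hval_a2] at this
          split_ifs at this <;> omega)
        (by
          rw [ha]
          intro h
          exact Huv (add_right_cancel h).symm)
        (by
          intro p h1 h2 h3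
          have c1 : σ p ≠ a := fun h => h2 (by rw [← hinv p, h, ha])
          have c2 : σ p ≠ a + 1 := by
            intro h
            apply h1
            rw [← hinv p, h, hsa1]
          rw [hσ'app, hE'E _ ((ne_a _).mp h1) ((ne_a1 _).mp h2)]
          rw [hshift (σ p) c1 c2 h3])
        (by
          intro p h1 h2 h3
          have c1 : σ p ≠ a := fun h => h2 (by rw [← hinv p, h, ha])
          have c2 : σ p ≠ a + 1 := by
            intro h
            apply h1
            rw [← hinv p, h, hsa1]
          rw [hσ'app, hE'E _ ((ne_a _).mp h1) ((ne_a1 _).mp h2)]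
          have hsp : σ p = a - 1 := eq_sub_iff_add_eq.mpr h3
          rw [hsp, ha, ← hshift6])
      have hcard : Nat.card (Quot (rel (fun p : ZMod (2*K) => σ p + 1)))
          = Nat.card (Quot (rel (fun p : ZMod (2*(K-1)) => σ' p + 1))) + 1 := by
        rw [Nat.card_congr equiv, Finite.card_option]
      -- monotonicity
      have hEmono : ∀ x1 x2 : ZMod (2*K), x1.val ≠ m → x1.val ≠ m+1 → x2.val ≠ m →
          x2.val ≠ m+1 → x1.val < x2.val → (E x1).val < (E x2).val := by
        intro x1 x2 a1 a2 a3 a4 a5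
        rw [hEval _ a1 a2, hEval _ a3 a4]
        split_ifs <;> omega
      have hE'mono : ∀ y1 y2 : ZMod (2*(K-1)), y1.val < y2.val → (E' y1).val < (E' y2).val := by
        intro y1 y2 hy
        rw [hE'val, hE'val]
        split_ifs <;> omega
      have hspair : ∀ p q : ZMod (2*K), σ p = q →
          (p.val = m → q.val = m+1) ∧ (p.val = m+1 → q.val = m) := by
        intro p q h
        constructor
        · intro hv
          have hp : p = a := vinj _ _ hv
          rw [← h, hp, ha, hval_a1]
        · intro hv
          have hp : p = a + 1 := vinj _ _ (by rw [hv, hval_a1])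
          rw [← h, hp, hsa1]
      have hNCiff : (∀ w x y z : ZMod (2*K), w.val < x.val → x.val < y.val → y.val < z.val →
            σ w = y → σ x = z → False) ↔
          (∀ w x y z : ZMod (2*(K-1)), w.val < x.val → x.val < y.val → y.val < z.val →
            σ' w = y → σ' x = z → False) := by
        constructor
        · intro hN w x y z h1 h2 h3 hw hx
          have e1 : σ (E' w) = E' y := by
            have h4 := congrArg E' hw
            rw [hσ'app] at h4
            rwa [hE'E _ (hsne w).1 (hsne w).2] at h4
          have e2 : σ (E' x) = E' z := by
            have h4 := congrArg E' hx
            rw [hσ'app] at h4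
            rwa [hE'E _ (hsne x).1 (hsne x).2] at h4
          exact hN (E' w) (E' x) (E' y) (E' z) (hE'mono _ _ h1) (hE'mono _ _ h2)
            (hE'mono _ _ h3) e1 e2
        · intro hN w x y z h1 h2 h3 hw hx
          have hw' : σ y = w := by rw [← hw, hinv]
          have hx' : σ z = x := by rw [← hx, hinv]
          have Hw : w.val ≠ m ∧ w.val ≠ m+1 := by
            constructor <;> intro h
            · have := (hspair w y hw).1 h; omega
            · have := (hspair w y hw).2 h; omega
          have Hx : x.val ≠ m ∧ x.val ≠ m+1 := by
            constructor <;> intro h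
            · have := (hspair x z hx).1 h; omega
            · have := (hspair x z hx).2 h; omega
          have Hy : y.val ≠ m ∧ y.val ≠ m+1 := by
            constructor <;> intro h
            · have := (hspair y w hw').1 h; omega
            · have := (hspair y w hw').2 h; omega
          have Hz : z.val ≠ m ∧ z.val ≠ m+1 := by
            constructor <;> intro h
            · have := (hspair z x hx').1 h; omega
            · have := (hspair z x hx').2 h; omega
          have e1 : σ' (E w) = E y := by
            rw [hσ'app, hE'E _ Hw.1 Hw.2, hw]
          have e2 : σ' (E x) = E z := by
            rw [hσ'app, hE'E _ Hx.1 Hx.2, hx]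
          exact hN (E w) (E x) (E y) (E z)
            (hEmono _ _ Hw.1 Hw.2 Hx.1 Hx.2 h1)
            (hEmono _ _ Hx.1 Hx.2 Hy.1 Hy.2 h2)
            (hEmono _ _ Hy.1 Hy.2 Hz.1 Hz.2 h3) e1 e2
      rw [hcard, hNCiff]
      have harith : (Nat.card (Quot (rel (fun p : ZMod (2*(K-1)) => σ' p + 1))) + 1 = K + 1)
          ↔ (Nat.card (Quot (rel (fun p : ZMod (2*(K-1)) => σ' p + 1))) = (K-1) + 1) := by
        omega
      rw [harith, IHres]
    · -- no non-wrap adjacent pair: both sides are false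
      push_neg at hA
      refine iff_of_false ?_ ?_
      · -- the number of vertex classes is at most K
        intro hcard
        have hsub : ∀ p q : {p : ZMod (2*K) // (fun p => σ p + 1) p = p}, p = q := by
          have key : ∀ r : ZMod (2*K), σ r + 1 = r → (r - 1).val = 2*K - 1 := by
            intro r hr
            have h1 : σ r = r - 1 := eq_sub_iff_add_eq.mpr hr
            have h2 : σ (r - 1) = r := by rw [← h1, hinv]
            have h3 := hA (r - 1) (by rw [h2, sub_add_cancel])
            have := hvlt (r - 1)
            omega
          rintro ⟨p, hp⟩ ⟨q, hq⟩
          simp only at hp hq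
          have hpq : p - 1 = q - 1 := vinj _ _ (by rw [key p hp, key q hq])
          have : p = q := by
            have := congrArg (fun z => z + 1) hpq
            simpa [sub_add_cancel] using this
          exact Subtype.ext this
        haveI : Subsingleton {p : ZMod (2*K) // (fun p => σ p + 1) p = p} := ⟨hsub⟩
        have hFle : Nat.card {p : ZMod (2*K) // (fun p => σ p + 1) p = p} ≤ 1 :=
          Finite.card_le_one_iff_subsingleton.mpr ‹_›
        have hle := card_quot_le (fun p : ZMod (2*K) => σ p + 1) finj
        rw [Nat.card_zmod] at hle
        have hFle' : Nat.card {p : ZMod (2*K) // σ p + 1 = p} ≤ 1 := hFle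
        omega
      · -- there is a crossing
        intro hNC
        classical
        have hex : ∃ g : ℕ, ∃ x : ZMod (2*K), x.val < (σ x).val ∧ (σ x).val - x.val = g := by
          refine ⟨_, 0, ?_, rfl⟩
          have h0 : (σ 0).val ≠ 0 := by
            intro h
            exact hfpf 0 (vinj _ _ (by rw [h, ZMod.val_zero]))
          rw [ZMod.val_zero]
          omega
        obtain ⟨x, hx1, hx2⟩ := Nat.find_spec hex
        set g := Nat.find hex with hgdef
        have hmin : ∀ g' < g, ¬ ∃ x : ZMod (2*K), x.val < (σ x).val ∧ (σ x).val - x.val = g' :=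
          fun g' h => Nat.find_min hex h
        have hsxlt := hvlt (σ x)
        have hg2 : 2 ≤ g := by
          rcases Nat.lt_or_ge g 2 with h | h
          · exfalso
            have hb : (x + 1).val = x.val + 1 := by
              rw [val_add_one, if_pos (by omega)]
            have hsx : σ x = x + 1 := vinj _ _ (by rw [hb]; omega)
            have := hA x hsx
            omega
          · exact h
        have hbv : (x + 1).val = x.val + 1 := by
          rw [val_add_one, if_pos (by omega)]
        set b := x + 1 with hbdef
        set d := σ b with hddef
        have hsd : σ d = b := hinv b
        have hdb : d ≠ b := hfpf b
        have hdx : d.val ≠ x.val := by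
          intro h
          have : d = x := vinj _ _ h
          have : b = σ x := by rw [← hsd, this]
          have := congrArg ZMod.val this
          omega
        have hdsx : d.val ≠ (σ x).val := by
          intro h
          have h' : d = σ x := vinj _ _ h
          have : b = x := by rw [← hsd, h', hinv]
          have := congrArg ZMod.val this
          omega
        have hdb' : d.val ≠ b.val := fun h => hdb (vinj _ _ h)
        rcases Nat.lt_or_ge d.val x.val with hc | hc
        · exact hNC d x b (σ x) hc (by omega) (by omega) hsd rfl
        rcases Nat.lt_or_ge ((σ x).val) d.val with hc2 | hc2
        · exact hNC x b (σ x) d (by omega) (by omega) hc2 rfl rfl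
        · -- middle: contradiction with minimality
          exfalso
          have hrfl : (σ b).val = d.val := rfl
          refine hmin (d.val - b.val) (by omega) ⟨b, by omega, by omega⟩

/-- **Sphere ↔ non-crossing.** Let `σ` be a pairing (fixed-point-free involution) of the
`2K` boundary edges of a `2K`-gon, indexed by `ZMod (2K)` (edge `p` runs from vertex `p`
to vertex `p+1`). Gluing each pair of edges with opposite orientation identifies vertex
`p` with vertex `σ p + 1`; the glued closed orientable surface has Euler characteristic
`V - K + 1` where `V` is the number of vertex equivalence classes (the quotient below).
The surface is a sphere, i.e. `V - K + 1 = 2`, iff `σ` is non-crossing (there are no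
`a < b < c < d` with `{a,c}` and `{b,d}` both pairs of `σ`). -/
theorem stmt_5 (K : ℕ) (hK : 0 < K) (σ : Equiv.Perm (ZMod (2 * K)))
    (hinv : ∀ x, σ (σ x) = x) (hfpf : ∀ x, σ x ≠ x) :
    Nat.card (Quot fun p q : ZMod (2 * K) => q = σ p + 1) = K + 1 ↔
      ∀ a b c d : ZMod (2 * K), a.val < b.val → b.val < c.val → c.val < d.val →
        σ a = c → σ b = d → False := by
  exact main_aux K hK σ hinv hfpf
end

section
/- Let $U, V$ be independent random variables with $U$ distributed as Brownian motion on $U(N)$ at time $t_1$ and $V$ at time $t_2$, both started at the identity. Then $\mathbb{E}[\mathrm{Tr}(U V U^{-1} V^{-1})]$ in the limit $t_1, t_2 \to \infty$ (equivalently, with $U, V$ independent Haar-distributed on $U(N)$) equals $\frac{1}{N}$. -/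
open MeasureTheory

namespace Stmt15Aux

open Matrix

variable {N : ℕ}
local notation "GN" => Matrix.unitaryGroup (Fin N) ℂ
local notation "Mat" => Matrix (Fin N) (Fin N) ℂ

instance : SecondCountableTopology Mat := inferInstanceAs (SecondCountableTopology (Fin N → Fin N → ℂ))

instance : SecondCountableTopology GN :=
  Topology.IsInducing.secondCountableTopology
    (Topology.IsInducing.subtypeVal : Topology.IsInducing ((↑) : GN → Mat))

lemma entry_cont (i j : Fin N) : Continuous fun V : GN => (V : Mat) i j :=
  (continuous_apply j).comp ((continuous_apply i).comp continuous_subtype_val)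

lemma inv_entry_cont (i j : Fin N) : Continuous fun V : GN => ((V⁻¹ : GN) : Mat) i j := by
  have h : (fun V : GN => ((V⁻¹ : GN) : Mat) i j) = fun V : GN => star ((V : Mat) j i) := by
    funext V; simp [Matrix.UnitaryGroup.inv_val, Matrix.star_apply]
  rw [h]; exact continuous_star.comp (entry_cont j i)

lemma int_pair [MeasurableSpace GN] [BorelSpace GN] (μ : Measure GN) [IsProbabilityMeasure μ]
    (i k l j : Fin N) :
    Integrable (fun V : GN => (V : Mat) i k * ((V⁻¹ : GN) : Mat) l j) μ := by
  refine ⟨((entry_cont i k).mul (inv_entry_cont l j)).aestronglyMeasurable, ?_⟩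
  refine HasFiniteIntegral.of_bounded (C := 1) (Filter.Eventually.of_forall fun V => ?_)
  rw [norm_mul]
  have h1 := entry_norm_bound_of_unitary V.2 i k
  have h2 := entry_norm_bound_of_unitary (V⁻¹ : GN).2 l j
  nlinarith [norm_nonneg ((V : Mat) i k), norm_nonneg (((V⁻¹ : GN) : Mat) l j)]

lemma schur [MeasurableSpace GN] [BorelSpace GN] (μ : Measure GN) [IsProbabilityMeasure μ]
    (hN : 0 < N) (hinv : ∀ g : GN, Measure.map (fun x => g * x) μ = μ) (k l i j : Fin N) :
    (∫ V : GN, (V : Mat) i k * ((V⁻¹ : GN) : Mat) l j ∂μ)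
      = if i = j ∧ k = l then 1 / (N : ℂ) else 0 := by
  classical
  set M : Mat := Matrix.of (fun a b => ∫ V : GN, (V : Mat) a k * ((V⁻¹ : GN) : Mat) l b ∂μ)
    with hMdef
  have hMab : ∀ a b, M a b = ∫ V : GN, (V : Mat) a k * ((V⁻¹ : GN) : Mat) l b ∂μ :=
    fun a b => rfl
  -- Step 1: equivariance
  have key : ∀ g : GN, (g : Mat) * M = M * (g : Mat) := by
    intro g
    have h1 : M = (g : Mat) * M * ((g⁻¹ : GN) : Mat) := by
      ext a b
      have cov : M a b = ∫ V : GN, ((g*V : GN) : Mat) a k * (((g*V)⁻¹ : GN) : Mat) l b ∂μ := by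
        rw [hMab]
        conv_lhs => rw [← hinv g]
        rw [integral_map (f := fun V : GN => (V : Mat) a k * ((V⁻¹ : GN) : Mat) l b) (Continuous.aemeasurable (continuous_mul_left g))
          (Continuous.aestronglyMeasurable ((entry_cont a k).mul (inv_entry_cont l b)))]
      have expand : ∀ V : GN, ((g*V : GN) : Mat) a k * (((g*V)⁻¹ : GN) : Mat) l b
          = ∑ p : Fin N, ∑ q : Fin N,
              (g : Mat) a p * ((g⁻¹ : GN) : Mat) q b * ((V : Mat) p k * ((V⁻¹ : GN) : Mat) l q) := by
        intro V
        have e1 : ((g*V : GN) : Mat) a k = ∑ p, (g : Mat) a p * (V : Mat) p k := by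
          simp [Matrix.UnitaryGroup.mul_val, Matrix.mul_apply]
        have e2 : (((g*V)⁻¹ : GN) : Mat) l b
            = ∑ q, ((V⁻¹ : GN) : Mat) l q * ((g⁻¹ : GN) : Mat) q b := by
          rw [_root_.mul_inv_rev]
          simp [Matrix.UnitaryGroup.mul_val, Matrix.mul_apply]
        rw [e1, e2, Finset.sum_mul_sum]
        refine Finset.sum_congr rfl fun p _ => Finset.sum_congr rfl fun q _ => by ring
      have h2 : M a b = ∑ p : Fin N, ∑ q : Fin N,
          (g : Mat) a p * ((g⁻¹ : GN) : Mat) q b * M p q := by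
        rw [cov]
        simp_rw [expand]
        rw [integral_finset_sum _ (fun p _ => integrable_finset_sum _
          (fun q _ => ((int_pair μ p k l q).const_mul _)))]
        refine Finset.sum_congr rfl fun p _ => ?_
        rw [integral_finset_sum _ (fun q _ => ((int_pair μ p k l q).const_mul _))]
        refine Finset.sum_congr rfl fun q _ => ?_
        rw [integral_const_mul, hMab]
      rw [h2]
      simp only [Matrix.mul_apply]
      rw [Finset.sum_comm]
      refine Finset.sum_congr rfl fun q _ => ?_
      rw [Finset.sum_mul]
      refine Finset.sum_congr rfl fun p _ => by ring
    have hgg : ((g⁻¹ : GN) : Mat) * (g : Mat) = 1 := by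
      rw [← Matrix.UnitaryGroup.mul_val, inv_mul_cancel, Matrix.UnitaryGroup.one_val]
    conv_rhs => rw [h1]
    rw [mul_assoc ((g : Mat) * M), hgg, mul_one]
  -- Step 2: M is diagonal
  have hdiag : ∀ a b : Fin N, a ≠ b → M a b = 0 := by
    intro a b hab
    set d : Fin N → ℂ := fun m => if m = a then -1 else 1 with hd
    have hD : Matrix.diagonal d ∈ Matrix.unitaryGroup (Fin N) ℂ := by
      rw [Matrix.mem_unitaryGroup_iff, Matrix.star_eq_conjTranspose,
        Matrix.diagonal_conjTranspose, Matrix.diagonal_mul_diagonal]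
      ext x y
      rcases eq_or_ne x y with rfl | hxy
      · rw [Matrix.diagonal_apply_eq, Matrix.one_apply_eq]
        by_cases h : x = a <;> simp [hd, h]
      · rw [Matrix.diagonal_apply_ne _ hxy, Matrix.one_apply_ne hxy]
    have hcomm := key ⟨Matrix.diagonal d, hD⟩
    have h3 : ∀ x y, (Matrix.diagonal d * M) x y = (M * Matrix.diagonal d) x y := by
      intro x y; rw [hcomm]
    have h3' := h3 a b
    rw [Matrix.diagonal_mul, Matrix.mul_diagonal] at h3'
    have hda : d a = -1 := by simp [hd]
    have hdb : d b = 1 := by rw [hd]; exact if_neg (fun h => hab h.symm)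
    rw [hda, hdb, mul_one] at h3'
    linear_combination (-1/2 : ℂ) * h3'
  -- Step 3: diagonal entries are equal
  have hdiageq : ∀ a b : Fin N, M a a = M b b := by
    intro a b
    set σ : Equiv.Perm (Fin N) := Equiv.swap a b with hσ
    set S : Mat := σ.toPEquiv.toMatrix with hS
    have hSentry : ∀ x y, S x y = if σ x = y then (1:ℂ) else 0 := by
      intro x y; rw [hS, PEquiv.toMatrix_toPEquiv_eq]; simp [Matrix.one_apply]
    have hSU : S ∈ Matrix.unitaryGroup (Fin N) ℂ := by
      rw [Matrix.mem_unitaryGroup_iff]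
      ext x y
      rw [Matrix.mul_apply]
      have hterm : ∀ c, S x c * (star S) c y
          = if c = σ x then (if σ y = σ x then (1:ℂ) else 0) else 0 := by
        intro c
        rw [Matrix.star_apply, hSentry, hSentry]
        by_cases h1 : c = σ x
        · subst h1
          by_cases h2 : σ y = σ x <;> simp [h2]
        · rw [if_neg (fun h => h1 h.symm), zero_mul, if_neg (fun h => h1 h)]
      rw [Finset.sum_congr rfl (fun c _ => hterm c), Finset.sum_ite_eq' Finset.univ (σ x)]
      simp [Matrix.one_apply, Equiv.apply_eq_iff_eq, eq_comm]
    have hcomm := key ⟨S, hSU⟩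
    have h4 : M.submatrix σ id = M.submatrix id σ.symm := by
      rw [← PEquiv.toMatrix_toPEquiv_mul, ← PEquiv.mul_toMatrix_toPEquiv]
      exact hcomm
    have h5 : ∀ x y, M.submatrix σ id x y = M.submatrix id σ.symm x y := by
      intro x y; rw [h4]
    have h6 := h5 a b
    simp only [Matrix.submatrix_apply, id_eq, hσ, Equiv.symm_swap,
      Equiv.swap_apply_left, Equiv.swap_apply_right] at h6
    exact h6.symm
  -- Step 4: trace of M
  have htr : ∑ a, M a a = if k = l then (1:ℂ) else 0 := by
    have step : ∑ a, M a a = ∫ V : GN, (∑ a, (V : Mat) a k * ((V⁻¹ : GN) : Mat) l a) ∂μ :=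
      (integral_finset_sum _ (fun a _ => int_pair μ a k l a)).symm
    rw [step]
    have hptw : ∀ V : GN, (∑ a, (V : Mat) a k * ((V⁻¹ : GN) : Mat) l a)
        = if k = l then (1:ℂ) else 0 := by
      intro V
      calc ∑ a, (V : Mat) a k * ((V⁻¹ : GN) : Mat) l a
          = ∑ a, ((V⁻¹ : GN) : Mat) l a * (V : Mat) a k :=
            Finset.sum_congr rfl fun a _ => mul_comm _ _
        _ = (((V⁻¹ : GN) : Mat) * (V : Mat)) l k := (Matrix.mul_apply).symm
        _ = (1 : Mat) l k := by
            rw [← Matrix.UnitaryGroup.mul_val, inv_mul_cancel, Matrix.UnitaryGroup.one_val]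
        _ = if k = l then 1 else 0 := by simp [Matrix.one_apply, eq_comm]
    simp_rw [hptw]
    simp
  -- Conclusion
  have hNe : (N:ℂ) ≠ 0 := Nat.cast_ne_zero.mpr hN.ne'
  by_cases hij : i = j
  · subst hij
    have hsum : (N:ℂ) * M i i = if k = l then (1:ℂ) else 0 := by
      rw [← htr, Finset.sum_congr rfl (fun a _ => hdiageq a i)]
      simp [Finset.sum_const, Finset.card_univ, nsmul_eq_mul]
    have hMii : M i i = if k = l then (1:ℂ)/(N:ℂ) else 0 := by
      by_cases hkl : k = l
      · rw [if_pos hkl] at hsum ⊢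
        field_simp
        linear_combination hsum
      · rw [if_neg hkl] at hsum ⊢
        exact (mul_eq_zero.mp hsum).resolve_left hNe
    rw [(hMab i i).symm] at *
    show M i i = _
    rw [hMii]
    by_cases hkl : k = l <;> simp [hkl]
  · show M i j = _
    rw [hdiag i j hij]
    simp [hij]
lemma trace_mul4 (A B C D : Mat) :
    Matrix.trace (A * B * C * D) =
      ∑ z : Fin N × Fin N × Fin N × Fin N,
        A z.1 z.2.2.2 * B z.2.2.2 z.2.2.1 * C z.2.2.1 z.2.1 * D z.2.1 z.1 := by
  simp only [Fintype.sum_prod_type, Matrix.trace, Matrix.diag, Matrix.mul_apply,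
    Finset.sum_mul, Finset.mul_sum, mul_assoc]
  exact Finset.sum_congr rfl fun i _ => Finset.sum_congr rfl fun j _ => Finset.sum_comm

-- continuity of big integrand
lemma big_cont : Continuous (fun p : GN × GN =>
    Matrix.trace ((p.1 * p.2 * p.1⁻¹ * p.2⁻¹ : GN) : Mat)) := by
  have h1 : Continuous fun p : GN × GN => (p.1 : Mat) :=
    continuous_subtype_val.comp continuous_fst
  have h2 : Continuous fun p : GN × GN => (p.2 : Mat) :=
    continuous_subtype_val.comp continuous_snd
  have hco : (fun p : GN × GN => ((p.1 * p.2 * p.1⁻¹ * p.2⁻¹ : GN) : Mat))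
      = fun p : GN × GN => (p.1 : Mat) * (p.2 : Mat) * star (p.1 : Mat) * star (p.2 : Mat) := by
    funext p; simp [Matrix.UnitaryGroup.mul_val, Matrix.UnitaryGroup.inv_val]
  have : Continuous (fun p : GN × GN => ((p.1 * p.2 * p.1⁻¹ * p.2⁻¹ : GN) : Mat)) := by
    rw [hco]
    exact ((h1.matrix_mul h2).matrix_mul h1.matrix_conjTranspose).matrix_mul
      h2.matrix_conjTranspose
  exact this.matrix_trace


lemma sum_ite_irrel' {α : Type*} [Fintype α] (c : Prop) [Decidable c] (f : α → ℂ) :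
    (∑ x : α, if c then f x else 0) = if c then ∑ x, f x else 0 := by
  split <;> simp

end Stmt15Aux

open Stmt15Aux in
/-- **Expected trace of the commutator of independent Haar unitaries.** Let `μ` be the
Haar probability measure on the compact group `U(N)` (characterized as a
left-translation-invariant Borel probability measure), and let `U, V` be independent
with law `μ` (i.e. integrate over `μ.prod μ`). Then `E[Tr(U V U⁻¹ V⁻¹)] = 1/N`.
(This is the large-area limit of the figure-eight Wilson loop expectation.) -/
theorem stmt_15 (N : ℕ) (hN : 0 < N)
    [MeasurableSpace (Matrix.unitaryGroup (Fin N) ℂ)]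
    [BorelSpace (Matrix.unitaryGroup (Fin N) ℂ)]
    (μ : Measure (Matrix.unitaryGroup (Fin N) ℂ)) [IsProbabilityMeasure μ]
    (hinv : ∀ g : Matrix.unitaryGroup (Fin N) ℂ,
      Measure.map (fun x => g * x) μ = μ) :
    ∫ p : Matrix.unitaryGroup (Fin N) ℂ × Matrix.unitaryGroup (Fin N) ℂ,
        Matrix.trace
          ((p.1 * p.2 * p.1⁻¹ * p.2⁻¹ : Matrix.unitaryGroup (Fin N) ℂ) :
            Matrix (Fin N) (Fin N) ℂ) ∂(μ.prod μ) = 1 / (N : ℂ) := by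
  classical
  set f : Matrix.unitaryGroup (Fin N) ℂ × Matrix.unitaryGroup (Fin N) ℂ → ℂ :=
    fun p => Matrix.trace ((p.1 * p.2 * p.1⁻¹ * p.2⁻¹ : Matrix.unitaryGroup (Fin N) ℂ) :
      Matrix (Fin N) (Fin N) ℂ) with hf
  have hfint : Integrable f (μ.prod μ) := by
    refine ⟨big_cont.aestronglyMeasurable, ?_⟩
    refine HasFiniteIntegral.of_bounded (C := (N : ℝ)) (Filter.Eventually.of_forall fun p => ?_)
    calc ‖f p‖ = ‖∑ i, ((p.1 * p.2 * p.1⁻¹ * p.2⁻¹ : Matrix.unitaryGroup (Fin N) ℂ) :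
            Matrix (Fin N) (Fin N) ℂ) i i‖ := rfl
      _ ≤ ∑ i, ‖((p.1 * p.2 * p.1⁻¹ * p.2⁻¹ : Matrix.unitaryGroup (Fin N) ℂ) :
            Matrix (Fin N) (Fin N) ℂ) i i‖ := norm_sum_le _ _
      _ ≤ ∑ _i : Fin N, (1 : ℝ) := Finset.sum_le_sum fun i _ =>
            entry_norm_bound_of_unitary
              (p.1 * p.2 * p.1⁻¹ * p.2⁻¹ : Matrix.unitaryGroup (Fin N) ℂ).2 i i
      _ = (N : ℝ) := by simp
  rw [show (∫ p : Matrix.unitaryGroup (Fin N) ℂ × Matrix.unitaryGroup (Fin N) ℂ,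
        Matrix.trace ((p.1 * p.2 * p.1⁻¹ * p.2⁻¹ : Matrix.unitaryGroup (Fin N) ℂ) :
          Matrix (Fin N) (Fin N) ℂ) ∂(μ.prod μ)) = ∫ p, f p ∂(μ.prod μ) from rfl]
  rw [integral_prod_symm f hfint]
  have hinner : ∀ V : Matrix.unitaryGroup (Fin N) ℂ,
      (∫ U : Matrix.unitaryGroup (Fin N) ℂ, f (U, V) ∂μ)
        = ∑ i : Fin N, ∑ k : Fin N,
            ((V : Matrix (Fin N) (Fin N) ℂ) k k *
              ((V⁻¹ : Matrix.unitaryGroup (Fin N) ℂ) : Matrix (Fin N) (Fin N) ℂ) i i)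
            * (1 / (N : ℂ)) := by
    intro V
    have hexp : ∀ U : Matrix.unitaryGroup (Fin N) ℂ,
        f (U, V) = ∑ z : Fin N × Fin N × Fin N × Fin N,
          ((V : Matrix (Fin N) (Fin N) ℂ) z.2.2.2 z.2.2.1 *
            ((V⁻¹ : Matrix.unitaryGroup (Fin N) ℂ) : Matrix (Fin N) (Fin N) ℂ) z.2.1 z.1) *
          ((U : Matrix (Fin N) (Fin N) ℂ) z.1 z.2.2.2 *
            ((U⁻¹ : Matrix.unitaryGroup (Fin N) ℂ) : Matrix (Fin N) (Fin N) ℂ) z.2.2.1 z.2.1) := by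
      intro U
      have hco : ((U * V * U⁻¹ * V⁻¹ : Matrix.unitaryGroup (Fin N) ℂ) :
            Matrix (Fin N) (Fin N) ℂ)
          = (U : Matrix (Fin N) (Fin N) ℂ) * (V : Matrix (Fin N) (Fin N) ℂ) *
            ((U⁻¹ : Matrix.unitaryGroup (Fin N) ℂ) : Matrix (Fin N) (Fin N) ℂ) *
            ((V⁻¹ : Matrix.unitaryGroup (Fin N) ℂ) : Matrix (Fin N) (Fin N) ℂ) := by
        simp [Matrix.UnitaryGroup.mul_val]
      show Matrix.trace ((U * V * U⁻¹ * V⁻¹ : Matrix.unitaryGroup (Fin N) ℂ) :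
        Matrix (Fin N) (Fin N) ℂ) = _
      rw [hco, trace_mul4]
      exact Finset.sum_congr rfl fun z _ => by ring
    simp_rw [hexp]
    rw [integral_finset_sum _ (fun z _ =>
      (int_pair μ z.1 z.2.2.2 z.2.2.1 z.2.1).const_mul _)]
    have hterm : ∀ z : Fin N × Fin N × Fin N × Fin N,
        (∫ U : Matrix.unitaryGroup (Fin N) ℂ,
          ((V : Matrix (Fin N) (Fin N) ℂ) z.2.2.2 z.2.2.1 *
            ((V⁻¹ : Matrix.unitaryGroup (Fin N) ℂ) : Matrix (Fin N) (Fin N) ℂ) z.2.1 z.1) *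
          ((U : Matrix (Fin N) (Fin N) ℂ) z.1 z.2.2.2 *
            ((U⁻¹ : Matrix.unitaryGroup (Fin N) ℂ) : Matrix (Fin N) (Fin N) ℂ) z.2.2.1 z.2.1) ∂μ)
        = ((V : Matrix (Fin N) (Fin N) ℂ) z.2.2.2 z.2.2.1 *
            ((V⁻¹ : Matrix.unitaryGroup (Fin N) ℂ) : Matrix (Fin N) (Fin N) ℂ) z.2.1 z.1) *
          (if z.1 = z.2.1 ∧ z.2.2.2 = z.2.2.1 then 1 / (N : ℂ) else 0) := by
      intro z
      rw [integral_const_mul, schur μ hN hinv]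
    simp_rw [hterm]
    simp only [Fintype.sum_prod_type, ite_and, mul_ite, mul_zero, sum_ite_irrel',
      Finset.sum_ite_eq, Finset.sum_ite_eq', Finset.mem_univ, if_true, Finset.sum_const_zero]
  simp_rw [hinner]
  rw [integral_finset_sum _ (fun i _ => integrable_finset_sum _
    (fun k _ => (int_pair μ k k i i).mul_const _))]
  have houter : ∀ i : Fin N, (∫ V : Matrix.unitaryGroup (Fin N) ℂ,
      ∑ k : Fin N, ((V : Matrix (Fin N) (Fin N) ℂ) k k *
        ((V⁻¹ : Matrix.unitaryGroup (Fin N) ℂ) : Matrix (Fin N) (Fin N) ℂ) i i) * (1 / (N : ℂ)) ∂μ)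
      = ∑ k : Fin N, (if k = i then 1 / (N : ℂ) else 0) * (1 / (N : ℂ)) := by
    intro i
    rw [integral_finset_sum _ (fun k _ => (int_pair μ k k i i).mul_const _)]
    refine Finset.sum_congr rfl fun k _ => ?_
    rw [integral_mul_const, schur μ hN hinv]
    simp
  simp_rw [houter]
  have hNe : (N : ℂ) ≠ 0 := Nat.cast_ne_zero.mpr hN.ne'
  simp only [ite_mul, zero_mul, Finset.sum_ite_eq', Finset.mem_univ, if_true,
    Finset.sum_const, Finset.card_univ, Fintype.card_fin, nsmul_eq_mul]
  field_simp
end
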